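/- Let W be an algebraic Weyl tensor on an oriented 4-dimensional inner product space, diagonalized in a basis as in Derdzinski's lemma with self-dual eigenvalues λ^+, μ^+, ν^+ and anti-self-dual eigenvalues λ^-, μ^-, ν^-. Let P be the linear map P(e_i) = (−1)^{δ_{4i}} e_i and W^P := W ∘ P (composition in each slot). Then W^{kijl} W^P_{kijl} = 8(λ^+λ^- + μ^+μ^- + ν^+ν^-). -/
import Mathlib


/-- A constant 4-tensor on `ℝ⁴` with the algebraic symmetries of the Weyl tensor. -/
def IsWeyl (W : Fin 4 → Fin 4 → Fin 4 → Fin 4 → ℝ) : Prop :=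
  (∀ k i j l, W k i j l = - W i k j l) ∧
  (∀ k i j l, W k i j l = - W k i l j) ∧
  (∀ k i j l, W k i j l = W j l k i) ∧
  (∀ k i j l, W k i j l + W i j k l + W j k i l = 0) ∧
  (∀ i j, (∑ k, W k i j k) = 0)

/-- Action of a Riemann-symmetric tensor on 2-forms: `(T̂ω)_{kl} = (1/2) T_{ijlk} ω^{ij}`. -/
noncomputable def hatMap (T : Fin 4 → Fin 4 → Fin 4 → Fin 4 → ℝ)
    (ω : Fin 4 → Fin 4 → ℝ) : Fin 4 → Fin 4 → ℝ :=
  fun k l => (1/2 : ℝ) * ∑ i, ∑ j, T i j l k * ω i j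

/-- The elementary 2-form `eᵃ∧eᵇ` as an antisymmetric matrix. -/
noncomputable def form2 (a b : Fin 4) : Fin 4 → Fin 4 → ℝ :=
  fun i j => (if i = a ∧ j = b then (1:ℝ) else 0) - (if i = b ∧ j = a then (1:ℝ) else 0)

/-- The sign `(-1)^{δ_{4a}}` of the reflection `P(e_i) = (-1)^{δ_{4i}} e_i`
(the index `4` is `(3 : Fin 4)`). -/
noncomputable def psign (a : Fin 4) : ℝ := if a = 3 then -1 else 1

set_option maxHeartbeats 4000000 in
/-- If `Ŵ` is diagonalized in the basis `{ω±,η±,θ±}` with self-dual eigenvalues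
`λ⁺, μ⁺, ν⁺` and anti-self-dual eigenvalues `λ⁻, μ⁻, ν⁻`, and `Wᴾ = W ∘ P` with
`P(e_i) = (-1)^{δ_{4i}} e_i`, then `W^{kijl} Wᴾ_{kijl} = 8(λ⁺λ⁻ + μ⁺μ⁻ + ν⁺ν⁻)`. -/
theorem stmt_15 (W : Fin 4 → Fin 4 → Fin 4 → Fin 4 → ℝ) (hW : IsWeyl W)
    (lp mp np lm mm nm : ℝ)
    (h1 : hatMap W (form2 0 1 + form2 2 3) = lp • (form2 0 1 + form2 2 3))
    (h2 : hatMap W (form2 0 2 + form2 3 1) = mp • (form2 0 2 + form2 3 1))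
    (h3 : hatMap W (form2 0 3 + form2 1 2) = np • (form2 0 3 + form2 1 2))
    (h4 : hatMap W (form2 0 1 - form2 2 3) = lm • (form2 0 1 - form2 2 3))
    (h5 : hatMap W (form2 0 2 - form2 3 1) = mm • (form2 0 2 - form2 3 1))
    (h6 : hatMap W (form2 0 3 - form2 1 2) = nm • (form2 0 3 - form2 1 2)) :
    (∑ k, ∑ i, ∑ j, ∑ l,
        W k i j l * (psign k * psign i * psign j * psign l * W k i j l))
      = 8 * (lp * lm + mp * mm + np * nm) := by
  have e1 : ∀ k l : Fin 4, W 0 1 l k + W 2 3 l k = lp * (form2 0 1 k l + form2 2 3 k l) := by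
    intro k l
    have t := congrFun (congrFun h1 k) l
    simp [hatMap, form2, Fin.sum_univ_four] at t ⊢
    linarith [hW.1 0 1 l k, hW.1 2 3 l k]
  have e4 : ∀ k l : Fin 4, W 0 1 l k - W 2 3 l k = lm * (form2 0 1 k l - form2 2 3 k l) := by
    intro k l
    have t := congrFun (congrFun h4 k) l
    simp [hatMap, form2, Fin.sum_univ_four] at t ⊢
    linarith [hW.1 0 1 l k, hW.1 2 3 l k]
  have e2 : ∀ k l : Fin 4, W 0 2 l k + W 3 1 l k = mp * (form2 0 2 k l + form2 3 1 k l) := by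
    intro k l
    have t := congrFun (congrFun h2 k) l
    simp [hatMap, form2, Fin.sum_univ_four] at t ⊢
    linarith [hW.1 0 2 l k, hW.1 3 1 l k]
  have e5 : ∀ k l : Fin 4, W 0 2 l k - W 3 1 l k = mm * (form2 0 2 k l - form2 3 1 k l) := by
    intro k l
    have t := congrFun (congrFun h5 k) l
    simp [hatMap, form2, Fin.sum_univ_four] at t ⊢
    linarith [hW.1 0 2 l k, hW.1 3 1 l k]
  have e3 : ∀ k l : Fin 4, W 0 3 l k + W 1 2 l k = np * (form2 0 3 k l + form2 1 2 k l) := by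
    intro k l
    have t := congrFun (congrFun h3 k) l
    simp [hatMap, form2, Fin.sum_univ_four] at t ⊢
    linarith [hW.1 0 3 l k, hW.1 1 2 l k]
  have e6 : ∀ k l : Fin 4, W 0 3 l k - W 1 2 l k = nm * (form2 0 3 k l - form2 1 2 k l) := by
    intro k l
    have t := congrFun (congrFun h6 k) l
    simp [hatMap, form2, Fin.sum_univ_four] at t ⊢
    linarith [hW.1 0 3 l k, hW.1 1 2 l k]
  have hv_0_1_0_0 : W 0 1 0 0 = (0 : ℝ) := by
    have t1 := e1 0 0
    have t2 := e4 0 0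
    simp [form2, Fin.isValue] at t1 t2
    linarith only [t1, t2]
  have hv_0_1_0_1 : W 0 1 0 1 = ((-1 : ℝ) * ((lp + lm)/2)) := by
    have t1 := e1 1 0
    have t2 := e4 1 0
    simp [form2, Fin.isValue] at t1 t2
    linarith only [t1, t2]
  have hv_0_1_0_2 : W 0 1 0 2 = (0 : ℝ) := by
    have t1 := e1 2 0
    have t2 := e4 2 0
    simp [form2, Fin.isValue] at t1 t2
    linarith only [t1, t2]
  have hv_0_1_0_3 : W 0 1 0 3 = (0 : ℝ) := by
    have t1 := e1 3 0
    have t2 := e4 3 0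
    simp [form2, Fin.isValue] at t1 t2
    linarith only [t1, t2]
  have hv_0_1_1_0 : W 0 1 1 0 = ((1 : ℝ) * ((lp + lm)/2)) := by
    have t1 := e1 0 1
    have t2 := e4 0 1
    simp [form2, Fin.isValue] at t1 t2
    linarith only [t1, t2]
  have hv_0_1_1_1 : W 0 1 1 1 = (0 : ℝ) := by
    have t1 := e1 1 1
    have t2 := e4 1 1
    simp [form2, Fin.isValue] at t1 t2
    linarith only [t1, t2]
  have hv_0_1_1_2 : W 0 1 1 2 = (0 : ℝ) := by
    have t1 := e1 2 1
    have t2 := e4 2 1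
    simp [form2, Fin.isValue] at t1 t2
    linarith only [t1, t2]
  have hv_0_1_1_3 : W 0 1 1 3 = (0 : ℝ) := by
    have t1 := e1 3 1
    have t2 := e4 3 1
    simp [form2, Fin.isValue] at t1 t2
    linarith only [t1, t2]
  have hv_0_1_2_0 : W 0 1 2 0 = (0 : ℝ) := by
    have t1 := e1 0 2
    have t2 := e4 0 2
    simp [form2, Fin.isValue] at t1 t2
    linarith only [t1, t2]
  have hv_0_1_2_1 : W 0 1 2 1 = (0 : ℝ) := by
    have t1 := e1 1 2
    have t2 := e4 1 2
    simp [form2, Fin.isValue] at t1 t2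
    linarith only [t1, t2]
  have hv_0_1_2_2 : W 0 1 2 2 = (0 : ℝ) := by
    have t1 := e1 2 2
    have t2 := e4 2 2
    simp [form2, Fin.isValue] at t1 t2
    linarith only [t1, t2]
  have hv_0_1_2_3 : W 0 1 2 3 = ((-1 : ℝ) * ((lp - lm)/2)) := by
    have t1 := e1 3 2
    have t2 := e4 3 2
    simp [form2, Fin.isValue] at t1 t2
    linarith only [t1, t2]
  have hv_0_1_3_0 : W 0 1 3 0 = (0 : ℝ) := by
    have t1 := e1 0 3
    have t2 := e4 0 3
    simp [form2, Fin.isValue] at t1 t2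
    linarith only [t1, t2]
  have hv_0_1_3_1 : W 0 1 3 1 = (0 : ℝ) := by
    have t1 := e1 1 3
    have t2 := e4 1 3
    simp [form2, Fin.isValue] at t1 t2
    linarith only [t1, t2]
  have hv_0_1_3_2 : W 0 1 3 2 = ((1 : ℝ) * ((lp - lm)/2)) := by
    have t1 := e1 2 3
    have t2 := e4 2 3
    simp [form2, Fin.isValue] at t1 t2
    linarith only [t1, t2]
  have hv_0_1_3_3 : W 0 1 3 3 = (0 : ℝ) := by
    have t1 := e1 3 3
    have t2 := e4 3 3
    simp [form2, Fin.isValue] at t1 t2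
    linarith only [t1, t2]
  have hv_2_3_0_0 : W 2 3 0 0 = (0 : ℝ) := by
    have t1 := e1 0 0
    have t2 := e4 0 0
    simp [form2, Fin.isValue] at t1 t2
    linarith only [t1, t2]
  have hv_2_3_0_1 : W 2 3 0 1 = ((-1 : ℝ) * ((lp - lm)/2)) := by
    have t1 := e1 1 0
    have t2 := e4 1 0
    simp [form2, Fin.isValue] at t1 t2
    linarith only [t1, t2]
  have hv_2_3_0_2 : W 2 3 0 2 = (0 : ℝ) := by
    have t1 := e1 2 0
    have t2 := e4 2 0
    simp [form2, Fin.isValue] at t1 t2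
    linarith only [t1, t2]
  have hv_2_3_0_3 : W 2 3 0 3 = (0 : ℝ) := by
    have t1 := e1 3 0
    have t2 := e4 3 0
    simp [form2, Fin.isValue] at t1 t2
    linarith only [t1, t2]
  have hv_2_3_1_0 : W 2 3 1 0 = ((1 : ℝ) * ((lp - lm)/2)) := by
    have t1 := e1 0 1
    have t2 := e4 0 1
    simp [form2, Fin.isValue] at t1 t2
    linarith only [t1, t2]
  have hv_2_3_1_1 : W 2 3 1 1 = (0 : ℝ) := by
    have t1 := e1 1 1
    have t2 := e4 1 1
    simp [form2, Fin.isValue] at t1 t2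
    linarith only [t1, t2]
  have hv_2_3_1_2 : W 2 3 1 2 = (0 : ℝ) := by
    have t1 := e1 2 1
    have t2 := e4 2 1
    simp [form2, Fin.isValue] at t1 t2
    linarith only [t1, t2]
  have hv_2_3_1_3 : W 2 3 1 3 = (0 : ℝ) := by
    have t1 := e1 3 1
    have t2 := e4 3 1
    simp [form2, Fin.isValue] at t1 t2
    linarith only [t1, t2]
  have hv_2_3_2_0 : W 2 3 2 0 = (0 : ℝ) := by
    have t1 := e1 0 2
    have t2 := e4 0 2
    simp [form2, Fin.isValue] at t1 t2
    linarith only [t1, t2]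
  have hv_2_3_2_1 : W 2 3 2 1 = (0 : ℝ) := by
    have t1 := e1 1 2
    have t2 := e4 1 2
    simp [form2, Fin.isValue] at t1 t2
    linarith only [t1, t2]
  have hv_2_3_2_2 : W 2 3 2 2 = (0 : ℝ) := by
    have t1 := e1 2 2
    have t2 := e4 2 2
    simp [form2, Fin.isValue] at t1 t2
    linarith only [t1, t2]
  have hv_2_3_2_3 : W 2 3 2 3 = ((-1 : ℝ) * ((lp + lm)/2)) := by
    have t1 := e1 3 2
    have t2 := e4 3 2
    simp [form2, Fin.isValue] at t1 t2
    linarith only [t1, t2]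
  have hv_2_3_3_0 : W 2 3 3 0 = (0 : ℝ) := by
    have t1 := e1 0 3
    have t2 := e4 0 3
    simp [form2, Fin.isValue] at t1 t2
    linarith only [t1, t2]
  have hv_2_3_3_1 : W 2 3 3 1 = (0 : ℝ) := by
    have t1 := e1 1 3
    have t2 := e4 1 3
    simp [form2, Fin.isValue] at t1 t2
    linarith only [t1, t2]
  have hv_2_3_3_2 : W 2 3 3 2 = ((1 : ℝ) * ((lp + lm)/2)) := by
    have t1 := e1 2 3
    have t2 := e4 2 3
    simp [form2, Fin.isValue] at t1 t2
    linarith only [t1, t2]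
  have hv_2_3_3_3 : W 2 3 3 3 = (0 : ℝ) := by
    have t1 := e1 3 3
    have t2 := e4 3 3
    simp [form2, Fin.isValue] at t1 t2
    linarith only [t1, t2]
  have hv_0_2_0_0 : W 0 2 0 0 = (0 : ℝ) := by
    have t1 := e2 0 0
    have t2 := e5 0 0
    simp [form2, Fin.isValue] at t1 t2
    linarith only [t1, t2]
  have hv_0_2_0_1 : W 0 2 0 1 = (0 : ℝ) := by
    have t1 := e2 1 0
    have t2 := e5 1 0
    simp [form2, Fin.isValue] at t1 t2
    linarith only [t1, t2]
  have hv_0_2_0_2 : W 0 2 0 2 = ((-1 : ℝ) * ((mp + mm)/2)) := by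
    have t1 := e2 2 0
    have t2 := e5 2 0
    simp [form2, Fin.isValue] at t1 t2
    linarith only [t1, t2]
  have hv_0_2_0_3 : W 0 2 0 3 = (0 : ℝ) := by
    have t1 := e2 3 0
    have t2 := e5 3 0
    simp [form2, Fin.isValue] at t1 t2
    linarith only [t1, t2]
  have hv_0_2_1_0 : W 0 2 1 0 = (0 : ℝ) := by
    have t1 := e2 0 1
    have t2 := e5 0 1
    simp [form2, Fin.isValue] at t1 t2
    linarith only [t1, t2]
  have hv_0_2_1_1 : W 0 2 1 1 = (0 : ℝ) := by
    have t1 := e2 1 1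
    have t2 := e5 1 1
    simp [form2, Fin.isValue] at t1 t2
    linarith only [t1, t2]
  have hv_0_2_1_2 : W 0 2 1 2 = (0 : ℝ) := by
    have t1 := e2 2 1
    have t2 := e5 2 1
    simp [form2, Fin.isValue] at t1 t2
    linarith only [t1, t2]
  have hv_0_2_1_3 : W 0 2 1 3 = ((1 : ℝ) * ((mp - mm)/2)) := by
    have t1 := e2 3 1
    have t2 := e5 3 1
    simp [form2, Fin.isValue] at t1 t2
    linarith only [t1, t2]
  have hv_0_2_2_0 : W 0 2 2 0 = ((1 : ℝ) * ((mp + mm)/2)) := by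
    have t1 := e2 0 2
    have t2 := e5 0 2
    simp [form2, Fin.isValue] at t1 t2
    linarith only [t1, t2]
  have hv_0_2_2_1 : W 0 2 2 1 = (0 : ℝ) := by
    have t1 := e2 1 2
    have t2 := e5 1 2
    simp [form2, Fin.isValue] at t1 t2
    linarith only [t1, t2]
  have hv_0_2_2_2 : W 0 2 2 2 = (0 : ℝ) := by
    have t1 := e2 2 2
    have t2 := e5 2 2
    simp [form2, Fin.isValue] at t1 t2
    linarith only [t1, t2]
  have hv_0_2_2_3 : W 0 2 2 3 = (0 : ℝ) := by
    have t1 := e2 3 2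
    have t2 := e5 3 2
    simp [form2, Fin.isValue] at t1 t2
    linarith only [t1, t2]
  have hv_0_2_3_0 : W 0 2 3 0 = (0 : ℝ) := by
    have t1 := e2 0 3
    have t2 := e5 0 3
    simp [form2, Fin.isValue] at t1 t2
    linarith only [t1, t2]
  have hv_0_2_3_1 : W 0 2 3 1 = ((-1 : ℝ) * ((mp - mm)/2)) := by
    have t1 := e2 1 3
    have t2 := e5 1 3
    simp [form2, Fin.isValue] at t1 t2
    linarith only [t1, t2]
  have hv_0_2_3_2 : W 0 2 3 2 = (0 : ℝ) := by
    have t1 := e2 2 3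
    have t2 := e5 2 3
    simp [form2, Fin.isValue] at t1 t2
    linarith only [t1, t2]
  have hv_0_2_3_3 : W 0 2 3 3 = (0 : ℝ) := by
    have t1 := e2 3 3
    have t2 := e5 3 3
    simp [form2, Fin.isValue] at t1 t2
    linarith only [t1, t2]
  have hv_3_1_0_0 : W 3 1 0 0 = (0 : ℝ) := by
    have t1 := e2 0 0
    have t2 := e5 0 0
    simp [form2, Fin.isValue] at t1 t2
    linarith only [t1, t2]
  have hv_3_1_0_1 : W 3 1 0 1 = (0 : ℝ) := by
    have t1 := e2 1 0
    have t2 := e5 1 0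
    simp [form2, Fin.isValue] at t1 t2
    linarith only [t1, t2]
  have hv_3_1_0_2 : W 3 1 0 2 = ((-1 : ℝ) * ((mp - mm)/2)) := by
    have t1 := e2 2 0
    have t2 := e5 2 0
    simp [form2, Fin.isValue] at t1 t2
    linarith only [t1, t2]
  have hv_3_1_0_3 : W 3 1 0 3 = (0 : ℝ) := by
    have t1 := e2 3 0
    have t2 := e5 3 0
    simp [form2, Fin.isValue] at t1 t2
    linarith only [t1, t2]
  have hv_3_1_1_0 : W 3 1 1 0 = (0 : ℝ) := by
    have t1 := e2 0 1
    have t2 := e5 0 1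
    simp [form2, Fin.isValue] at t1 t2
    linarith only [t1, t2]
  have hv_3_1_1_1 : W 3 1 1 1 = (0 : ℝ) := by
    have t1 := e2 1 1
    have t2 := e5 1 1
    simp [form2, Fin.isValue] at t1 t2
    linarith only [t1, t2]
  have hv_3_1_1_2 : W 3 1 1 2 = (0 : ℝ) := by
    have t1 := e2 2 1
    have t2 := e5 2 1
    simp [form2, Fin.isValue] at t1 t2
    linarith only [t1, t2]
  have hv_3_1_1_3 : W 3 1 1 3 = ((1 : ℝ) * ((mp + mm)/2)) := by
    have t1 := e2 3 1
    have t2 := e5 3 1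
    simp [form2, Fin.isValue] at t1 t2
    linarith only [t1, t2]
  have hv_3_1_2_0 : W 3 1 2 0 = ((1 : ℝ) * ((mp - mm)/2)) := by
    have t1 := e2 0 2
    have t2 := e5 0 2
    simp [form2, Fin.isValue] at t1 t2
    linarith only [t1, t2]
  have hv_3_1_2_1 : W 3 1 2 1 = (0 : ℝ) := by
    have t1 := e2 1 2
    have t2 := e5 1 2
    simp [form2, Fin.isValue] at t1 t2
    linarith only [t1, t2]
  have hv_3_1_2_2 : W 3 1 2 2 = (0 : ℝ) := by
    have t1 := e2 2 2
    have t2 := e5 2 2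
    simp [form2, Fin.isValue] at t1 t2
    linarith only [t1, t2]
  have hv_3_1_2_3 : W 3 1 2 3 = (0 : ℝ) := by
    have t1 := e2 3 2
    have t2 := e5 3 2
    simp [form2, Fin.isValue] at t1 t2
    linarith only [t1, t2]
  have hv_3_1_3_0 : W 3 1 3 0 = (0 : ℝ) := by
    have t1 := e2 0 3
    have t2 := e5 0 3
    simp [form2, Fin.isValue] at t1 t2
    linarith only [t1, t2]
  have hv_3_1_3_1 : W 3 1 3 1 = ((-1 : ℝ) * ((mp + mm)/2)) := by
    have t1 := e2 1 3
    have t2 := e5 1 3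
    simp [form2, Fin.isValue] at t1 t2
    linarith only [t1, t2]
  have hv_3_1_3_2 : W 3 1 3 2 = (0 : ℝ) := by
    have t1 := e2 2 3
    have t2 := e5 2 3
    simp [form2, Fin.isValue] at t1 t2
    linarith only [t1, t2]
  have hv_3_1_3_3 : W 3 1 3 3 = (0 : ℝ) := by
    have t1 := e2 3 3
    have t2 := e5 3 3
    simp [form2, Fin.isValue] at t1 t2
    linarith only [t1, t2]
  have hv_0_3_0_0 : W 0 3 0 0 = (0 : ℝ) := by
    have t1 := e3 0 0
    have t2 := e6 0 0
    simp [form2, Fin.isValue] at t1 t2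
    linarith only [t1, t2]
  have hv_0_3_0_1 : W 0 3 0 1 = (0 : ℝ) := by
    have t1 := e3 1 0
    have t2 := e6 1 0
    simp [form2, Fin.isValue] at t1 t2
    linarith only [t1, t2]
  have hv_0_3_0_2 : W 0 3 0 2 = (0 : ℝ) := by
    have t1 := e3 2 0
    have t2 := e6 2 0
    simp [form2, Fin.isValue] at t1 t2
    linarith only [t1, t2]
  have hv_0_3_0_3 : W 0 3 0 3 = ((-1 : ℝ) * ((np + nm)/2)) := by
    have t1 := e3 3 0
    have t2 := e6 3 0
    simp [form2, Fin.isValue] at t1 t2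
    linarith only [t1, t2]
  have hv_0_3_1_0 : W 0 3 1 0 = (0 : ℝ) := by
    have t1 := e3 0 1
    have t2 := e6 0 1
    simp [form2, Fin.isValue] at t1 t2
    linarith only [t1, t2]
  have hv_0_3_1_1 : W 0 3 1 1 = (0 : ℝ) := by
    have t1 := e3 1 1
    have t2 := e6 1 1
    simp [form2, Fin.isValue] at t1 t2
    linarith only [t1, t2]
  have hv_0_3_1_2 : W 0 3 1 2 = ((-1 : ℝ) * ((np - nm)/2)) := by
    have t1 := e3 2 1
    have t2 := e6 2 1
    simp [form2, Fin.isValue] at t1 t2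
    linarith only [t1, t2]
  have hv_0_3_1_3 : W 0 3 1 3 = (0 : ℝ) := by
    have t1 := e3 3 1
    have t2 := e6 3 1
    simp [form2, Fin.isValue] at t1 t2
    linarith only [t1, t2]
  have hv_0_3_2_0 : W 0 3 2 0 = (0 : ℝ) := by
    have t1 := e3 0 2
    have t2 := e6 0 2
    simp [form2, Fin.isValue] at t1 t2
    linarith only [t1, t2]
  have hv_0_3_2_1 : W 0 3 2 1 = ((1 : ℝ) * ((np - nm)/2)) := by
    have t1 := e3 1 2
    have t2 := e6 1 2
    simp [form2, Fin.isValue] at t1 t2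
    linarith only [t1, t2]
  have hv_0_3_2_2 : W 0 3 2 2 = (0 : ℝ) := by
    have t1 := e3 2 2
    have t2 := e6 2 2
    simp [form2, Fin.isValue] at t1 t2
    linarith only [t1, t2]
  have hv_0_3_2_3 : W 0 3 2 3 = (0 : ℝ) := by
    have t1 := e3 3 2
    have t2 := e6 3 2
    simp [form2, Fin.isValue] at t1 t2
    linarith only [t1, t2]
  have hv_0_3_3_0 : W 0 3 3 0 = ((1 : ℝ) * ((np + nm)/2)) := by
    have t1 := e3 0 3
    have t2 := e6 0 3
    simp [form2, Fin.isValue] at t1 t2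
    linarith only [t1, t2]
  have hv_0_3_3_1 : W 0 3 3 1 = (0 : ℝ) := by
    have t1 := e3 1 3
    have t2 := e6 1 3
    simp [form2, Fin.isValue] at t1 t2
    linarith only [t1, t2]
  have hv_0_3_3_2 : W 0 3 3 2 = (0 : ℝ) := by
    have t1 := e3 2 3
    have t2 := e6 2 3
    simp [form2, Fin.isValue] at t1 t2
    linarith only [t1, t2]
  have hv_0_3_3_3 : W 0 3 3 3 = (0 : ℝ) := by
    have t1 := e3 3 3
    have t2 := e6 3 3
    simp [form2, Fin.isValue] at t1 t2
    linarith only [t1, t2]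
  have hv_1_2_0_0 : W 1 2 0 0 = (0 : ℝ) := by
    have t1 := e3 0 0
    have t2 := e6 0 0
    simp [form2, Fin.isValue] at t1 t2
    linarith only [t1, t2]
  have hv_1_2_0_1 : W 1 2 0 1 = (0 : ℝ) := by
    have t1 := e3 1 0
    have t2 := e6 1 0
    simp [form2, Fin.isValue] at t1 t2
    linarith only [t1, t2]
  have hv_1_2_0_2 : W 1 2 0 2 = (0 : ℝ) := by
    have t1 := e3 2 0
    have t2 := e6 2 0
    simp [form2, Fin.isValue] at t1 t2
    linarith only [t1, t2]
  have hv_1_2_0_3 : W 1 2 0 3 = ((-1 : ℝ) * ((np - nm)/2)) := by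
    have t1 := e3 3 0
    have t2 := e6 3 0
    simp [form2, Fin.isValue] at t1 t2
    linarith only [t1, t2]
  have hv_1_2_1_0 : W 1 2 1 0 = (0 : ℝ) := by
    have t1 := e3 0 1
    have t2 := e6 0 1
    simp [form2, Fin.isValue] at t1 t2
    linarith only [t1, t2]
  have hv_1_2_1_1 : W 1 2 1 1 = (0 : ℝ) := by
    have t1 := e3 1 1
    have t2 := e6 1 1
    simp [form2, Fin.isValue] at t1 t2
    linarith only [t1, t2]
  have hv_1_2_1_2 : W 1 2 1 2 = ((-1 : ℝ) * ((np + nm)/2)) := by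
    have t1 := e3 2 1
    have t2 := e6 2 1
    simp [form2, Fin.isValue] at t1 t2
    linarith only [t1, t2]
  have hv_1_2_1_3 : W 1 2 1 3 = (0 : ℝ) := by
    have t1 := e3 3 1
    have t2 := e6 3 1
    simp [form2, Fin.isValue] at t1 t2
    linarith only [t1, t2]
  have hv_1_2_2_0 : W 1 2 2 0 = (0 : ℝ) := by
    have t1 := e3 0 2
    have t2 := e6 0 2
    simp [form2, Fin.isValue] at t1 t2
    linarith only [t1, t2]
  have hv_1_2_2_1 : W 1 2 2 1 = ((1 : ℝ) * ((np + nm)/2)) := by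
    have t1 := e3 1 2
    have t2 := e6 1 2
    simp [form2, Fin.isValue] at t1 t2
    linarith only [t1, t2]
  have hv_1_2_2_2 : W 1 2 2 2 = (0 : ℝ) := by
    have t1 := e3 2 2
    have t2 := e6 2 2
    simp [form2, Fin.isValue] at t1 t2
    linarith only [t1, t2]
  have hv_1_2_2_3 : W 1 2 2 3 = (0 : ℝ) := by
    have t1 := e3 3 2
    have t2 := e6 3 2
    simp [form2, Fin.isValue] at t1 t2
    linarith only [t1, t2]
  have hv_1_2_3_0 : W 1 2 3 0 = ((1 : ℝ) * ((np - nm)/2)) := by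
    have t1 := e3 0 3
    have t2 := e6 0 3
    simp [form2, Fin.isValue] at t1 t2
    linarith only [t1, t2]
  have hv_1_2_3_1 : W 1 2 3 1 = (0 : ℝ) := by
    have t1 := e3 1 3
    have t2 := e6 1 3
    simp [form2, Fin.isValue] at t1 t2
    linarith only [t1, t2]
  have hv_1_2_3_2 : W 1 2 3 2 = (0 : ℝ) := by
    have t1 := e3 2 3
    have t2 := e6 2 3
    simp [form2, Fin.isValue] at t1 t2
    linarith only [t1, t2]
  have hv_1_2_3_3 : W 1 2 3 3 = (0 : ℝ) := by
    have t1 := e3 3 3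
    have t2 := e6 3 3
    simp [form2, Fin.isValue] at t1 t2
    linarith only [t1, t2]
  have hv_0_0_0_0 : W 0 0 0 0 = (0:ℝ) := by linarith only [hW.1 0 0 0 0]
  have hv_0_0_0_1 : W 0 0 0 1 = (0:ℝ) := by linarith only [hW.1 0 0 0 1]
  have hv_0_0_0_2 : W 0 0 0 2 = (0:ℝ) := by linarith only [hW.1 0 0 0 2]
  have hv_0_0_0_3 : W 0 0 0 3 = (0:ℝ) := by linarith only [hW.1 0 0 0 3]
  have hv_0_0_1_0 : W 0 0 1 0 = (0:ℝ) := by linarith only [hW.1 0 0 1 0]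
  have hv_0_0_1_1 : W 0 0 1 1 = (0:ℝ) := by linarith only [hW.1 0 0 1 1]
  have hv_0_0_1_2 : W 0 0 1 2 = (0:ℝ) := by linarith only [hW.1 0 0 1 2]
  have hv_0_0_1_3 : W 0 0 1 3 = (0:ℝ) := by linarith only [hW.1 0 0 1 3]
  have hv_0_0_2_0 : W 0 0 2 0 = (0:ℝ) := by linarith only [hW.1 0 0 2 0]
  have hv_0_0_2_1 : W 0 0 2 1 = (0:ℝ) := by linarith only [hW.1 0 0 2 1]
  have hv_0_0_2_2 : W 0 0 2 2 = (0:ℝ) := by linarith only [hW.1 0 0 2 2]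
  have hv_0_0_2_3 : W 0 0 2 3 = (0:ℝ) := by linarith only [hW.1 0 0 2 3]
  have hv_0_0_3_0 : W 0 0 3 0 = (0:ℝ) := by linarith only [hW.1 0 0 3 0]
  have hv_0_0_3_1 : W 0 0 3 1 = (0:ℝ) := by linarith only [hW.1 0 0 3 1]
  have hv_0_0_3_2 : W 0 0 3 2 = (0:ℝ) := by linarith only [hW.1 0 0 3 2]
  have hv_0_0_3_3 : W 0 0 3 3 = (0:ℝ) := by linarith only [hW.1 0 0 3 3]
  have hv_1_0_0_0 : W 1 0 0 0 = -(0 : ℝ) := by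
    rw [hW.1 1 0 0 0, hv_0_1_0_0]
  have hv_1_0_0_1 : W 1 0 0 1 = -((-1 : ℝ) * ((lp + lm)/2)) := by
    rw [hW.1 1 0 0 1, hv_0_1_0_1]
  have hv_1_0_0_2 : W 1 0 0 2 = -(0 : ℝ) := by
    rw [hW.1 1 0 0 2, hv_0_1_0_2]
  have hv_1_0_0_3 : W 1 0 0 3 = -(0 : ℝ) := by
    rw [hW.1 1 0 0 3, hv_0_1_0_3]
  have hv_1_0_1_0 : W 1 0 1 0 = -((1 : ℝ) * ((lp + lm)/2)) := by
    rw [hW.1 1 0 1 0, hv_0_1_1_0]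
  have hv_1_0_1_1 : W 1 0 1 1 = -(0 : ℝ) := by
    rw [hW.1 1 0 1 1, hv_0_1_1_1]
  have hv_1_0_1_2 : W 1 0 1 2 = -(0 : ℝ) := by
    rw [hW.1 1 0 1 2, hv_0_1_1_2]
  have hv_1_0_1_3 : W 1 0 1 3 = -(0 : ℝ) := by
    rw [hW.1 1 0 1 3, hv_0_1_1_3]
  have hv_1_0_2_0 : W 1 0 2 0 = -(0 : ℝ) := by
    rw [hW.1 1 0 2 0, hv_0_1_2_0]
  have hv_1_0_2_1 : W 1 0 2 1 = -(0 : ℝ) := by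
    rw [hW.1 1 0 2 1, hv_0_1_2_1]
  have hv_1_0_2_2 : W 1 0 2 2 = -(0 : ℝ) := by
    rw [hW.1 1 0 2 2, hv_0_1_2_2]
  have hv_1_0_2_3 : W 1 0 2 3 = -((-1 : ℝ) * ((lp - lm)/2)) := by
    rw [hW.1 1 0 2 3, hv_0_1_2_3]
  have hv_1_0_3_0 : W 1 0 3 0 = -(0 : ℝ) := by
    rw [hW.1 1 0 3 0, hv_0_1_3_0]
  have hv_1_0_3_1 : W 1 0 3 1 = -(0 : ℝ) := by
    rw [hW.1 1 0 3 1, hv_0_1_3_1]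
  have hv_1_0_3_2 : W 1 0 3 2 = -((1 : ℝ) * ((lp - lm)/2)) := by
    rw [hW.1 1 0 3 2, hv_0_1_3_2]
  have hv_1_0_3_3 : W 1 0 3 3 = -(0 : ℝ) := by
    rw [hW.1 1 0 3 3, hv_0_1_3_3]
  have hv_1_1_0_0 : W 1 1 0 0 = (0:ℝ) := by linarith only [hW.1 1 1 0 0]
  have hv_1_1_0_1 : W 1 1 0 1 = (0:ℝ) := by linarith only [hW.1 1 1 0 1]
  have hv_1_1_0_2 : W 1 1 0 2 = (0:ℝ) := by linarith only [hW.1 1 1 0 2]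
  have hv_1_1_0_3 : W 1 1 0 3 = (0:ℝ) := by linarith only [hW.1 1 1 0 3]
  have hv_1_1_1_0 : W 1 1 1 0 = (0:ℝ) := by linarith only [hW.1 1 1 1 0]
  have hv_1_1_1_1 : W 1 1 1 1 = (0:ℝ) := by linarith only [hW.1 1 1 1 1]
  have hv_1_1_1_2 : W 1 1 1 2 = (0:ℝ) := by linarith only [hW.1 1 1 1 2]
  have hv_1_1_1_3 : W 1 1 1 3 = (0:ℝ) := by linarith only [hW.1 1 1 1 3]
  have hv_1_1_2_0 : W 1 1 2 0 = (0:ℝ) := by linarith only [hW.1 1 1 2 0]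
  have hv_1_1_2_1 : W 1 1 2 1 = (0:ℝ) := by linarith only [hW.1 1 1 2 1]
  have hv_1_1_2_2 : W 1 1 2 2 = (0:ℝ) := by linarith only [hW.1 1 1 2 2]
  have hv_1_1_2_3 : W 1 1 2 3 = (0:ℝ) := by linarith only [hW.1 1 1 2 3]
  have hv_1_1_3_0 : W 1 1 3 0 = (0:ℝ) := by linarith only [hW.1 1 1 3 0]
  have hv_1_1_3_1 : W 1 1 3 1 = (0:ℝ) := by linarith only [hW.1 1 1 3 1]
  have hv_1_1_3_2 : W 1 1 3 2 = (0:ℝ) := by linarith only [hW.1 1 1 3 2]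
  have hv_1_1_3_3 : W 1 1 3 3 = (0:ℝ) := by linarith only [hW.1 1 1 3 3]
  have hv_1_3_0_0 : W 1 3 0 0 = -(0 : ℝ) := by
    rw [hW.1 1 3 0 0, hv_3_1_0_0]
  have hv_1_3_0_1 : W 1 3 0 1 = -(0 : ℝ) := by
    rw [hW.1 1 3 0 1, hv_3_1_0_1]
  have hv_1_3_0_2 : W 1 3 0 2 = -((-1 : ℝ) * ((mp - mm)/2)) := by
    rw [hW.1 1 3 0 2, hv_3_1_0_2]
  have hv_1_3_0_3 : W 1 3 0 3 = -(0 : ℝ) := by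
    rw [hW.1 1 3 0 3, hv_3_1_0_3]
  have hv_1_3_1_0 : W 1 3 1 0 = -(0 : ℝ) := by
    rw [hW.1 1 3 1 0, hv_3_1_1_0]
  have hv_1_3_1_1 : W 1 3 1 1 = -(0 : ℝ) := by
    rw [hW.1 1 3 1 1, hv_3_1_1_1]
  have hv_1_3_1_2 : W 1 3 1 2 = -(0 : ℝ) := by
    rw [hW.1 1 3 1 2, hv_3_1_1_2]
  have hv_1_3_1_3 : W 1 3 1 3 = -((1 : ℝ) * ((mp + mm)/2)) := by
    rw [hW.1 1 3 1 3, hv_3_1_1_3]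
  have hv_1_3_2_0 : W 1 3 2 0 = -((1 : ℝ) * ((mp - mm)/2)) := by
    rw [hW.1 1 3 2 0, hv_3_1_2_0]
  have hv_1_3_2_1 : W 1 3 2 1 = -(0 : ℝ) := by
    rw [hW.1 1 3 2 1, hv_3_1_2_1]
  have hv_1_3_2_2 : W 1 3 2 2 = -(0 : ℝ) := by
    rw [hW.1 1 3 2 2, hv_3_1_2_2]
  have hv_1_3_2_3 : W 1 3 2 3 = -(0 : ℝ) := by
    rw [hW.1 1 3 2 3, hv_3_1_2_3]
  have hv_1_3_3_0 : W 1 3 3 0 = -(0 : ℝ) := by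
    rw [hW.1 1 3 3 0, hv_3_1_3_0]
  have hv_1_3_3_1 : W 1 3 3 1 = -((-1 : ℝ) * ((mp + mm)/2)) := by
    rw [hW.1 1 3 3 1, hv_3_1_3_1]
  have hv_1_3_3_2 : W 1 3 3 2 = -(0 : ℝ) := by
    rw [hW.1 1 3 3 2, hv_3_1_3_2]
  have hv_1_3_3_3 : W 1 3 3 3 = -(0 : ℝ) := by
    rw [hW.1 1 3 3 3, hv_3_1_3_3]
  have hv_2_0_0_0 : W 2 0 0 0 = -(0 : ℝ) := by
    rw [hW.1 2 0 0 0, hv_0_2_0_0]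
  have hv_2_0_0_1 : W 2 0 0 1 = -(0 : ℝ) := by
    rw [hW.1 2 0 0 1, hv_0_2_0_1]
  have hv_2_0_0_2 : W 2 0 0 2 = -((-1 : ℝ) * ((mp + mm)/2)) := by
    rw [hW.1 2 0 0 2, hv_0_2_0_2]
  have hv_2_0_0_3 : W 2 0 0 3 = -(0 : ℝ) := by
    rw [hW.1 2 0 0 3, hv_0_2_0_3]
  have hv_2_0_1_0 : W 2 0 1 0 = -(0 : ℝ) := by
    rw [hW.1 2 0 1 0, hv_0_2_1_0]
  have hv_2_0_1_1 : W 2 0 1 1 = -(0 : ℝ) := by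
    rw [hW.1 2 0 1 1, hv_0_2_1_1]
  have hv_2_0_1_2 : W 2 0 1 2 = -(0 : ℝ) := by
    rw [hW.1 2 0 1 2, hv_0_2_1_2]
  have hv_2_0_1_3 : W 2 0 1 3 = -((1 : ℝ) * ((mp - mm)/2)) := by
    rw [hW.1 2 0 1 3, hv_0_2_1_3]
  have hv_2_0_2_0 : W 2 0 2 0 = -((1 : ℝ) * ((mp + mm)/2)) := by
    rw [hW.1 2 0 2 0, hv_0_2_2_0]
  have hv_2_0_2_1 : W 2 0 2 1 = -(0 : ℝ) := by
    rw [hW.1 2 0 2 1, hv_0_2_2_1]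
  have hv_2_0_2_2 : W 2 0 2 2 = -(0 : ℝ) := by
    rw [hW.1 2 0 2 2, hv_0_2_2_2]
  have hv_2_0_2_3 : W 2 0 2 3 = -(0 : ℝ) := by
    rw [hW.1 2 0 2 3, hv_0_2_2_3]
  have hv_2_0_3_0 : W 2 0 3 0 = -(0 : ℝ) := by
    rw [hW.1 2 0 3 0, hv_0_2_3_0]
  have hv_2_0_3_1 : W 2 0 3 1 = -((-1 : ℝ) * ((mp - mm)/2)) := by
    rw [hW.1 2 0 3 1, hv_0_2_3_1]
  have hv_2_0_3_2 : W 2 0 3 2 = -(0 : ℝ) := by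
    rw [hW.1 2 0 3 2, hv_0_2_3_2]
  have hv_2_0_3_3 : W 2 0 3 3 = -(0 : ℝ) := by
    rw [hW.1 2 0 3 3, hv_0_2_3_3]
  have hv_2_1_0_0 : W 2 1 0 0 = -(0 : ℝ) := by
    rw [hW.1 2 1 0 0, hv_1_2_0_0]
  have hv_2_1_0_1 : W 2 1 0 1 = -(0 : ℝ) := by
    rw [hW.1 2 1 0 1, hv_1_2_0_1]
  have hv_2_1_0_2 : W 2 1 0 2 = -(0 : ℝ) := by
    rw [hW.1 2 1 0 2, hv_1_2_0_2]
  have hv_2_1_0_3 : W 2 1 0 3 = -((-1 : ℝ) * ((np - nm)/2)) := by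
    rw [hW.1 2 1 0 3, hv_1_2_0_3]
  have hv_2_1_1_0 : W 2 1 1 0 = -(0 : ℝ) := by
    rw [hW.1 2 1 1 0, hv_1_2_1_0]
  have hv_2_1_1_1 : W 2 1 1 1 = -(0 : ℝ) := by
    rw [hW.1 2 1 1 1, hv_1_2_1_1]
  have hv_2_1_1_2 : W 2 1 1 2 = -((-1 : ℝ) * ((np + nm)/2)) := by
    rw [hW.1 2 1 1 2, hv_1_2_1_2]
  have hv_2_1_1_3 : W 2 1 1 3 = -(0 : ℝ) := by
    rw [hW.1 2 1 1 3, hv_1_2_1_3]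
  have hv_2_1_2_0 : W 2 1 2 0 = -(0 : ℝ) := by
    rw [hW.1 2 1 2 0, hv_1_2_2_0]
  have hv_2_1_2_1 : W 2 1 2 1 = -((1 : ℝ) * ((np + nm)/2)) := by
    rw [hW.1 2 1 2 1, hv_1_2_2_1]
  have hv_2_1_2_2 : W 2 1 2 2 = -(0 : ℝ) := by
    rw [hW.1 2 1 2 2, hv_1_2_2_2]
  have hv_2_1_2_3 : W 2 1 2 3 = -(0 : ℝ) := by
    rw [hW.1 2 1 2 3, hv_1_2_2_3]
  have hv_2_1_3_0 : W 2 1 3 0 = -((1 : ℝ) * ((np - nm)/2)) := by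
    rw [hW.1 2 1 3 0, hv_1_2_3_0]
  have hv_2_1_3_1 : W 2 1 3 1 = -(0 : ℝ) := by
    rw [hW.1 2 1 3 1, hv_1_2_3_1]
  have hv_2_1_3_2 : W 2 1 3 2 = -(0 : ℝ) := by
    rw [hW.1 2 1 3 2, hv_1_2_3_2]
  have hv_2_1_3_3 : W 2 1 3 3 = -(0 : ℝ) := by
    rw [hW.1 2 1 3 3, hv_1_2_3_3]
  have hv_2_2_0_0 : W 2 2 0 0 = (0:ℝ) := by linarith only [hW.1 2 2 0 0]
  have hv_2_2_0_1 : W 2 2 0 1 = (0:ℝ) := by linarith only [hW.1 2 2 0 1]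
  have hv_2_2_0_2 : W 2 2 0 2 = (0:ℝ) := by linarith only [hW.1 2 2 0 2]
  have hv_2_2_0_3 : W 2 2 0 3 = (0:ℝ) := by linarith only [hW.1 2 2 0 3]
  have hv_2_2_1_0 : W 2 2 1 0 = (0:ℝ) := by linarith only [hW.1 2 2 1 0]
  have hv_2_2_1_1 : W 2 2 1 1 = (0:ℝ) := by linarith only [hW.1 2 2 1 1]
  have hv_2_2_1_2 : W 2 2 1 2 = (0:ℝ) := by linarith only [hW.1 2 2 1 2]
  have hv_2_2_1_3 : W 2 2 1 3 = (0:ℝ) := by linarith only [hW.1 2 2 1 3]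
  have hv_2_2_2_0 : W 2 2 2 0 = (0:ℝ) := by linarith only [hW.1 2 2 2 0]
  have hv_2_2_2_1 : W 2 2 2 1 = (0:ℝ) := by linarith only [hW.1 2 2 2 1]
  have hv_2_2_2_2 : W 2 2 2 2 = (0:ℝ) := by linarith only [hW.1 2 2 2 2]
  have hv_2_2_2_3 : W 2 2 2 3 = (0:ℝ) := by linarith only [hW.1 2 2 2 3]
  have hv_2_2_3_0 : W 2 2 3 0 = (0:ℝ) := by linarith only [hW.1 2 2 3 0]
  have hv_2_2_3_1 : W 2 2 3 1 = (0:ℝ) := by linarith only [hW.1 2 2 3 1]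
  have hv_2_2_3_2 : W 2 2 3 2 = (0:ℝ) := by linarith only [hW.1 2 2 3 2]
  have hv_2_2_3_3 : W 2 2 3 3 = (0:ℝ) := by linarith only [hW.1 2 2 3 3]
  have hv_3_0_0_0 : W 3 0 0 0 = -(0 : ℝ) := by
    rw [hW.1 3 0 0 0, hv_0_3_0_0]
  have hv_3_0_0_1 : W 3 0 0 1 = -(0 : ℝ) := by
    rw [hW.1 3 0 0 1, hv_0_3_0_1]
  have hv_3_0_0_2 : W 3 0 0 2 = -(0 : ℝ) := by
    rw [hW.1 3 0 0 2, hv_0_3_0_2]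
  have hv_3_0_0_3 : W 3 0 0 3 = -((-1 : ℝ) * ((np + nm)/2)) := by
    rw [hW.1 3 0 0 3, hv_0_3_0_3]
  have hv_3_0_1_0 : W 3 0 1 0 = -(0 : ℝ) := by
    rw [hW.1 3 0 1 0, hv_0_3_1_0]
  have hv_3_0_1_1 : W 3 0 1 1 = -(0 : ℝ) := by
    rw [hW.1 3 0 1 1, hv_0_3_1_1]
  have hv_3_0_1_2 : W 3 0 1 2 = -((-1 : ℝ) * ((np - nm)/2)) := by
    rw [hW.1 3 0 1 2, hv_0_3_1_2]
  have hv_3_0_1_3 : W 3 0 1 3 = -(0 : ℝ) := by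
    rw [hW.1 3 0 1 3, hv_0_3_1_3]
  have hv_3_0_2_0 : W 3 0 2 0 = -(0 : ℝ) := by
    rw [hW.1 3 0 2 0, hv_0_3_2_0]
  have hv_3_0_2_1 : W 3 0 2 1 = -((1 : ℝ) * ((np - nm)/2)) := by
    rw [hW.1 3 0 2 1, hv_0_3_2_1]
  have hv_3_0_2_2 : W 3 0 2 2 = -(0 : ℝ) := by
    rw [hW.1 3 0 2 2, hv_0_3_2_2]
  have hv_3_0_2_3 : W 3 0 2 3 = -(0 : ℝ) := by
    rw [hW.1 3 0 2 3, hv_0_3_2_3]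
  have hv_3_0_3_0 : W 3 0 3 0 = -((1 : ℝ) * ((np + nm)/2)) := by
    rw [hW.1 3 0 3 0, hv_0_3_3_0]
  have hv_3_0_3_1 : W 3 0 3 1 = -(0 : ℝ) := by
    rw [hW.1 3 0 3 1, hv_0_3_3_1]
  have hv_3_0_3_2 : W 3 0 3 2 = -(0 : ℝ) := by
    rw [hW.1 3 0 3 2, hv_0_3_3_2]
  have hv_3_0_3_3 : W 3 0 3 3 = -(0 : ℝ) := by
    rw [hW.1 3 0 3 3, hv_0_3_3_3]
  have hv_3_2_0_0 : W 3 2 0 0 = -(0 : ℝ) := by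
    rw [hW.1 3 2 0 0, hv_2_3_0_0]
  have hv_3_2_0_1 : W 3 2 0 1 = -((-1 : ℝ) * ((lp - lm)/2)) := by
    rw [hW.1 3 2 0 1, hv_2_3_0_1]
  have hv_3_2_0_2 : W 3 2 0 2 = -(0 : ℝ) := by
    rw [hW.1 3 2 0 2, hv_2_3_0_2]
  have hv_3_2_0_3 : W 3 2 0 3 = -(0 : ℝ) := by
    rw [hW.1 3 2 0 3, hv_2_3_0_3]
  have hv_3_2_1_0 : W 3 2 1 0 = -((1 : ℝ) * ((lp - lm)/2)) := by
    rw [hW.1 3 2 1 0, hv_2_3_1_0]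
  have hv_3_2_1_1 : W 3 2 1 1 = -(0 : ℝ) := by
    rw [hW.1 3 2 1 1, hv_2_3_1_1]
  have hv_3_2_1_2 : W 3 2 1 2 = -(0 : ℝ) := by
    rw [hW.1 3 2 1 2, hv_2_3_1_2]
  have hv_3_2_1_3 : W 3 2 1 3 = -(0 : ℝ) := by
    rw [hW.1 3 2 1 3, hv_2_3_1_3]
  have hv_3_2_2_0 : W 3 2 2 0 = -(0 : ℝ) := by
    rw [hW.1 3 2 2 0, hv_2_3_2_0]
  have hv_3_2_2_1 : W 3 2 2 1 = -(0 : ℝ) := by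
    rw [hW.1 3 2 2 1, hv_2_3_2_1]
  have hv_3_2_2_2 : W 3 2 2 2 = -(0 : ℝ) := by
    rw [hW.1 3 2 2 2, hv_2_3_2_2]
  have hv_3_2_2_3 : W 3 2 2 3 = -((-1 : ℝ) * ((lp + lm)/2)) := by
    rw [hW.1 3 2 2 3, hv_2_3_2_3]
  have hv_3_2_3_0 : W 3 2 3 0 = -(0 : ℝ) := by
    rw [hW.1 3 2 3 0, hv_2_3_3_0]
  have hv_3_2_3_1 : W 3 2 3 1 = -(0 : ℝ) := by
    rw [hW.1 3 2 3 1, hv_2_3_3_1]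
  have hv_3_2_3_2 : W 3 2 3 2 = -((1 : ℝ) * ((lp + lm)/2)) := by
    rw [hW.1 3 2 3 2, hv_2_3_3_2]
  have hv_3_2_3_3 : W 3 2 3 3 = -(0 : ℝ) := by
    rw [hW.1 3 2 3 3, hv_2_3_3_3]
  have hv_3_3_0_0 : W 3 3 0 0 = (0:ℝ) := by linarith only [hW.1 3 3 0 0]
  have hv_3_3_0_1 : W 3 3 0 1 = (0:ℝ) := by linarith only [hW.1 3 3 0 1]
  have hv_3_3_0_2 : W 3 3 0 2 = (0:ℝ) := by linarith only [hW.1 3 3 0 2]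
  have hv_3_3_0_3 : W 3 3 0 3 = (0:ℝ) := by linarith only [hW.1 3 3 0 3]
  have hv_3_3_1_0 : W 3 3 1 0 = (0:ℝ) := by linarith only [hW.1 3 3 1 0]
  have hv_3_3_1_1 : W 3 3 1 1 = (0:ℝ) := by linarith only [hW.1 3 3 1 1]
  have hv_3_3_1_2 : W 3 3 1 2 = (0:ℝ) := by linarith only [hW.1 3 3 1 2]
  have hv_3_3_1_3 : W 3 3 1 3 = (0:ℝ) := by linarith only [hW.1 3 3 1 3]
  have hv_3_3_2_0 : W 3 3 2 0 = (0:ℝ) := by linarith only [hW.1 3 3 2 0]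
  have hv_3_3_2_1 : W 3 3 2 1 = (0:ℝ) := by linarith only [hW.1 3 3 2 1]
  have hv_3_3_2_2 : W 3 3 2 2 = (0:ℝ) := by linarith only [hW.1 3 3 2 2]
  have hv_3_3_2_3 : W 3 3 2 3 = (0:ℝ) := by linarith only [hW.1 3 3 2 3]
  have hv_3_3_3_0 : W 3 3 3 0 = (0:ℝ) := by linarith only [hW.1 3 3 3 0]
  have hv_3_3_3_1 : W 3 3 3 1 = (0:ℝ) := by linarith only [hW.1 3 3 3 1]
  have hv_3_3_3_2 : W 3 3 3 2 = (0:ℝ) := by linarith only [hW.1 3 3 3 2]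
  have hv_3_3_3_3 : W 3 3 3 3 = (0:ℝ) := by linarith only [hW.1 3 3 3 3]
  simp only [Fin.sum_univ_four, hv_0_1_0_0, hv_0_1_0_1, hv_0_1_0_2, hv_0_1_0_3, hv_0_1_1_0, hv_0_1_1_1, hv_0_1_1_2, hv_0_1_1_3, hv_0_1_2_0, hv_0_1_2_1, hv_0_1_2_2, hv_0_1_2_3, hv_0_1_3_0, hv_0_1_3_1, hv_0_1_3_2, hv_0_1_3_3, hv_2_3_0_0, hv_2_3_0_1, hv_2_3_0_2, hv_2_3_0_3, hv_2_3_1_0, hv_2_3_1_1, hv_2_3_1_2, hv_2_3_1_3, hv_2_3_2_0, hv_2_3_2_1, hv_2_3_2_2, hv_2_3_2_3, hv_2_3_3_0, hv_2_3_3_1, hv_2_3_3_2, hv_2_3_3_3, hv_0_2_0_0, hv_0_2_0_1, hv_0_2_0_2, hv_0_2_0_3, hv_0_2_1_0, hv_0_2_1_1, hv_0_2_1_2, hv_0_2_1_3, hv_0_2_2_0, hv_0_2_2_1, hv_0_2_2_2, hv_0_2_2_3, hv_0_2_3_0, hv_0_2_3_1, hv_0_2_3_2, hv_0_2_3_3,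 hv_3_1_0_0, hv_3_1_0_1, hv_3_1_0_2, hv_3_1_0_3, hv_3_1_1_0, hv_3_1_1_1, hv_3_1_1_2, hv_3_1_1_3, hv_3_1_2_0, hv_3_1_2_1, hv_3_1_2_2, hv_3_1_2_3, hv_3_1_3_0, hv_3_1_3_1, hv_3_1_3_2, hv_3_1_3_3, hv_0_3_0_0, hv_0_3_0_1, hv_0_3_0_2, hv_0_3_0_3, hv_0_3_1_0, hv_0_3_1_1, hv_0_3_1_2, hv_0_3_1_3, hv_0_3_2_0, hv_0_3_2_1, hv_0_3_2_2, hv_0_3_2_3, hv_0_3_3_0, hv_0_3_3_1, hv_0_3_3_2, hv_0_3_3_3, hv_1_2_0_0, hv_1_2_0_1, hv_1_2_0_2, hv_1_2_0_3, hv_1_2_1_0, hv_1_2_1_1, hv_1_2_1_2, hv_1_2_1_3, hv_1_2_2_0, hv_1_2_2_1, hv_1_2_2_2, hv_1_2_2_3, hv_1_2_3_0, hv_1_2_3_1, hv_1_2_3_2, hv_1_2_3_3, hv_0_0_0_0, hv_0_0_0_1, hv_0_0_0_2, hv_0_0_0_3, hv_0_0_1_0, hv_0_0_1_1, hv_0_0_1_2,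 hv_0_0_1_3, hv_0_0_2_0, hv_0_0_2_1, hv_0_0_2_2, hv_0_0_2_3, hv_0_0_3_0, hv_0_0_3_1, hv_0_0_3_2, hv_0_0_3_3, hv_1_0_0_0, hv_1_0_0_1, hv_1_0_0_2, hv_1_0_0_3, hv_1_0_1_0, hv_1_0_1_1, hv_1_0_1_2, hv_1_0_1_3, hv_1_0_2_0, hv_1_0_2_1, hv_1_0_2_2, hv_1_0_2_3, hv_1_0_3_0, hv_1_0_3_1, hv_1_0_3_2, hv_1_0_3_3, hv_1_1_0_0, hv_1_1_0_1, hv_1_1_0_2, hv_1_1_0_3, hv_1_1_1_0, hv_1_1_1_1, hv_1_1_1_2, hv_1_1_1_3, hv_1_1_2_0, hv_1_1_2_1, hv_1_1_2_2, hv_1_1_2_3, hv_1_1_3_0, hv_1_1_3_1, hv_1_1_3_2, hv_1_1_3_3, hv_1_3_0_0, hv_1_3_0_1, hv_1_3_0_2, hv_1_3_0_3, hv_1_3_1_0, hv_1_3_1_1, hv_1_3_1_2, hv_1_3_1_3, hv_1_3_2_0, hv_1_3_2_1, hv_1_3_2_2, hv_1_3_2_3, hv_1_3_3_0, hv_1_3_3_1,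 hv_1_3_3_2, hv_1_3_3_3, hv_2_0_0_0, hv_2_0_0_1, hv_2_0_0_2, hv_2_0_0_3, hv_2_0_1_0, hv_2_0_1_1, hv_2_0_1_2, hv_2_0_1_3, hv_2_0_2_0, hv_2_0_2_1, hv_2_0_2_2, hv_2_0_2_3, hv_2_0_3_0, hv_2_0_3_1, hv_2_0_3_2, hv_2_0_3_3, hv_2_1_0_0, hv_2_1_0_1, hv_2_1_0_2, hv_2_1_0_3, hv_2_1_1_0, hv_2_1_1_1, hv_2_1_1_2, hv_2_1_1_3, hv_2_1_2_0, hv_2_1_2_1, hv_2_1_2_2, hv_2_1_2_3, hv_2_1_3_0, hv_2_1_3_1, hv_2_1_3_2, hv_2_1_3_3, hv_2_2_0_0, hv_2_2_0_1, hv_2_2_0_2, hv_2_2_0_3, hv_2_2_1_0, hv_2_2_1_1, hv_2_2_1_2, hv_2_2_1_3, hv_2_2_2_0, hv_2_2_2_1, hv_2_2_2_2, hv_2_2_2_3, hv_2_2_3_0, hv_2_2_3_1, hv_2_2_3_2, hv_2_2_3_3, hv_3_0_0_0, hv_3_0_0_1, hv_3_0_0_2, hv_3_0_0_3, hv_3_0_1_0,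 hv_3_0_1_1, hv_3_0_1_2, hv_3_0_1_3, hv_3_0_2_0, hv_3_0_2_1, hv_3_0_2_2, hv_3_0_2_3, hv_3_0_3_0, hv_3_0_3_1, hv_3_0_3_2, hv_3_0_3_3, hv_3_2_0_0, hv_3_2_0_1, hv_3_2_0_2, hv_3_2_0_3, hv_3_2_1_0, hv_3_2_1_1, hv_3_2_1_2, hv_3_2_1_3, hv_3_2_2_0, hv_3_2_2_1, hv_3_2_2_2, hv_3_2_2_3, hv_3_2_3_0, hv_3_2_3_1, hv_3_2_3_2, hv_3_2_3_3, hv_3_3_0_0, hv_3_3_0_1, hv_3_3_0_2, hv_3_3_0_3, hv_3_3_1_0, hv_3_3_1_1, hv_3_3_1_2, hv_3_3_1_3, hv_3_3_2_0, hv_3_3_2_1, hv_3_3_2_2, hv_3_3_2_3, hv_3_3_3_0, hv_3_3_3_1, hv_3_3_3_2, hv_3_3_3_3]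
  simp [psign]
  ring
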